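/- (Theorem 4, part 1.) Let (Ω, 𝓕, P) be a probability space, W : Ω → ℝ^d measurable, u : ℝ^d → ℝ^{p_R p_L × k} and f : ℝ^d → ℝ^{m_R m_L × k} measurable with E‖u(W)‖² < ∞ and E‖f(W)‖² < ∞, and let A ∈ ℝ^{p_R p_L × p_R p_L} be nonsingular. Fix a ∈ ℝ^{p_L × m_L} and define the random matrix V₂ = (f(W)ᵀ ⊗ A) Π (I_{p_R m_R} ⊗ vec(a)), where Π = I_{m_R} ⊗ [(I_{m_L} ⊗ K_{p_R,p_L}) K_{p_L m_L, p_R}], and V₁ = vec(A u(W)). If E[V₂ᵀ V₂] is invertible, then the matrix b* ∈ ℝ^{p_R × m_R} with vec(b*) = (E[V₂ᵀ V₂])⁻¹ E[V₂ᵀ V₁] minimizes b ↦ E‖A u(W) − A (b ⊗ a) f(W)‖² over all b ∈ ℝ^{p_R × m_R}. -/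

import Mathlib

open Matrix MeasureTheory ProbabilityTheory

/-- Column-stacking vectorization of a matrix: for `A : Matrix (Fin m) (Fin n) ℝ`,
`vecF A` is the vector in `ℝ^{nm}` with `vecF A (i + m*j) = A i j`
(the columns of `A` stacked on top of each other). -/
def vecF {m n : ℕ} (A : Matrix (Fin m) (Fin n) ℝ) : Fin (n * m) → ℝ :=
  fun x => A (finProdFinEquiv.symm x).2 (finProdFinEquiv.symm x).1

/-- Kronecker product of matrices with flat `Fin` indices:
`(A ⊗ B)_{(i-1)p+k, (j-1)q+l} = A i j * B k l`. -/
def kronF {m n p q : ℕ} (A : Matrix (Fin m) (Fin n) ℝ) (B : Matrix (Fin p) (Fin q) ℝ) :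
    Matrix (Fin (m * p)) (Fin (n * q)) ℝ :=
  Matrix.of fun i j =>
    A (finProdFinEquiv.symm i).1 (finProdFinEquiv.symm j).1 *
      B (finProdFinEquiv.symm i).2 (finProdFinEquiv.symm j).2

/-- Kronecker product of vectors: `(v ⊗ w)_{(i-1)n+j} = v i * w j`. -/
def vkronF {m n : ℕ} (v : Fin m → ℝ) (w : Fin n → ℝ) : Fin (m * n) → ℝ :=
  fun x => v (finProdFinEquiv.symm x).1 * w (finProdFinEquiv.symm x).2

/-- The commutation matrix `K_{m,n}`, the unique `mn × mn` matrix such that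
`K_{m,n} vec(A) = vec(Aᵀ)` for every `A : Matrix (Fin m) (Fin n) ℝ`. -/
def commF (m n : ℕ) : Matrix (Fin (m * n)) (Fin (n * m)) ℝ :=
  Matrix.of fun p q =>
    if (finProdFinEquiv.symm p : Fin m × Fin n) = (finProdFinEquiv.symm q : Fin n × Fin m).swap
    then 1 else 0

/-- A vector viewed as a one-column matrix. -/
def colM {n : ℕ} (v : Fin n → ℝ) : Matrix (Fin n) (Fin 1) ℝ :=
  Matrix.of fun i _ => v i

/-- The matrix `Π = I_{r₂} ⊗ [(I_{r₄} ⊗ K_{r₁,r₃}) K_{r₃r₄,r₁}]` of Lemma 1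
(dimension-equalities are handled by the identity reindexing `finCongr`). -/
noncomputable def PiMat (r1 r2 r3 r4 : ℕ) :
    Matrix (Fin (r2 * (r4 * (r1 * r3)))) (Fin (r2 * (r1 * (r4 * r3)))) ℝ :=
  kronF (1 : Matrix (Fin r2) (Fin r2) ℝ)
    ((kronF (1 : Matrix (Fin r4) (Fin r4) ℝ) (commF r1 r3)) *
      (Matrix.reindex (finCongr (show (r4 * r3) * r1 = r4 * (r3 * r1) by ring)) (Equiv.refl _)
        (commF (r4 * r3) r1)))

/-- Real matrices carry the Borel (product) σ-algebra. -/
noncomputable instance {m n : ℕ} : MeasurableSpace (Matrix (Fin m) (Fin n) ℝ) :=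
  (inferInstance : MeasurableSpace (Fin m → Fin n → ℝ))

/-!
Since `b ↦ A (b ⊗ a) F` is linear, it is `V₂ vec b` for a matrix `V₂` built from `F = f(W)`:
`vec(X Y Z) = (Zᵀ ⊗ X) vec Y` gives `vec(A (b ⊗ a) F) = (Fᵀ ⊗ A) vec(b ⊗ a)`, and the
commutation-matrix identity `Π (vec b ⊗ vec a) = vec(b ⊗ a)` (Lemma 1 of the paper) rewrites
`vec(b ⊗ a)` as `Π (I ⊗ vec a) vec b`. The objective is therefore the least-squares functional
`x ↦ E‖V₁ - V₂ x‖²`, and `vec b*` solves its normal equations `E[V₂ᵀV₂] x = E[V₂ᵀV₁]`. These say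
that the residual `V₁ - V₂ vec b*` is orthogonal in `L²` to every `V₂ y`, so the objective at `b`
exceeds the one at `b*` by `E‖V₂ (vec b - vec b*)‖² ≥ 0`.
-/

open scoped ENNReal

abbrev finPair {m n : ℕ} (i : Fin m) (j : Fin n) : Fin (m * n) := finProdFinEquiv (i, j)

lemma finPair_surjective {m n : ℕ} (x : Fin (m * n)) : ∃ i j, x = finPair i j :=
  ⟨_, _, (finProdFinEquiv.apply_symm_apply x).symm⟩

lemma sum_finPair {m n : ℕ} (f : Fin (m * n) → ℝ) :
    ∑ x, f x = ∑ i : Fin m, ∑ j : Fin n, f (finPair i j) := by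
  rw [← finProdFinEquiv.sum_comp, Fintype.sum_prod_type]

lemma cast_finPair_finPair {m n p : ℕ} (h : m * (n * p) = m * n * p)
    (i : Fin m) (j : Fin n) (k : Fin p) :
    Fin.cast h (finPair i (finPair j k)) = finPair (finPair i j) k := by
  ext
  simp only [Fin.val_cast, finProdFinEquiv_apply_val]
  ring

lemma cast_finPair_fin_one {n : ℕ} (h : n * 1 = n) (i : Fin n) (z : Fin 1) :
    Fin.cast h (finPair i z) = i := by
  ext
  simp only [Fin.val_cast, finProdFinEquiv_apply_val, Fin.val_eq_zero z]
  ring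

@[simp]
lemma vecF_finPair {m n : ℕ} (A : Matrix (Fin m) (Fin n) ℝ) (i : Fin m) (j : Fin n) :
    vecF A (finPair j i) = A i j := by
  simp only [vecF, Equiv.symm_apply_apply]

@[simp]
lemma vkronF_finPair {m n : ℕ} (v : Fin m → ℝ) (w : Fin n → ℝ) (i : Fin m) (j : Fin n) :
    vkronF v w (finPair i j) = v i * w j := by
  simp only [vkronF, Equiv.symm_apply_apply]

@[simp]
lemma kronF_finPair {m n p q : ℕ} (A : Matrix (Fin m) (Fin n) ℝ) (B : Matrix (Fin p) (Fin q) ℝ)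
    (i : Fin m) (k : Fin p) (j : Fin n) (l : Fin q) :
    kronF A B (finPair i k) (finPair j l) = A i j * B k l := by
  simp only [kronF, Matrix.of_apply, Equiv.symm_apply_apply]

lemma vecF_eq_vec {m n : ℕ} (A : Matrix (Fin m) (Fin n) ℝ) :
    vecF A = A.vec ∘ finProdFinEquiv.symm := rfl

lemma kronF_eq_submatrix_kroneckerMap {m n p q : ℕ} (A : Matrix (Fin m) (Fin n) ℝ)
    (B : Matrix (Fin p) (Fin q) ℝ) :
    kronF A B = (kroneckerMap (· * ·) A B).submatrix finProdFinEquiv.symm finProdFinEquiv.symm :=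
  rfl

lemma vecF_surjective {m n : ℕ} : Function.Surjective (vecF : Matrix (Fin m) (Fin n) ℝ → _) := by
  intro v
  obtain ⟨A, hA⟩ := vec_bijective.surjective (v ∘ finProdFinEquiv)
  exact ⟨A, by rw [vecF_eq_vec, hA, Function.comp_assoc, Equiv.self_comp_symm, Function.comp_id]⟩

lemma vecF_sub {m n : ℕ} (A B : Matrix (Fin m) (Fin n) ℝ) : vecF (A - B) = vecF A - vecF B := rfl

lemma sum_vecF_sq {m n : ℕ} (A : Matrix (Fin m) (Fin n) ℝ) :
    ∑ x, vecF A x ^ 2 = ∑ i, ∑ j, A i j ^ 2 := by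
  rw [sum_finPair, Finset.sum_comm]
  simp only [vecF_finPair]

theorem vecF_mul_mul {p q r s : ℕ} (X : Matrix (Fin p) (Fin q) ℝ) (Y : Matrix (Fin q) (Fin r) ℝ)
    (Z : Matrix (Fin r) (Fin s) ℝ) :
    vecF (X * Y * Z) = kronF Zᵀ X *ᵥ vecF Y := by
  rw [kronF_eq_submatrix_kroneckerMap, submatrix_mulVec_equiv, vecF_eq_vec, vecF_eq_vec,
    Equiv.symm_symm, Function.comp_assoc, Equiv.symm_comp_self, Function.comp_id,
    kronecker_mulVec_vec, transpose_transpose]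

theorem commF_mulVec_vecF {m n : ℕ} (A : Matrix (Fin m) (Fin n) ℝ) :
    commF m n *ᵥ vecF A = vecF Aᵀ := by
  funext x
  obtain ⟨i, j, rfl⟩ := finPair_surjective x
  simp only [mulVec, dotProduct, sum_finPair, commF, of_apply, Equiv.symm_apply_apply,
    vecF_finPair, Prod.swap_prod_mk, Prod.mk.injEq, ite_mul, one_mul, zero_mul, transpose_apply]
  simp [ite_and]

lemma kronF_one_mulVec_finPair {N p q : ℕ} (C : Matrix (Fin p) (Fin q) ℝ)
    (v : Fin (N * q) → ℝ) (i : Fin N) (y : Fin p) :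
    (kronF (1 : Matrix (Fin N) (Fin N) ℝ) C *ᵥ v) (finPair i y) =
      (C *ᵥ fun c => v (finPair i c)) y := by
  simp [mulVec, dotProduct, sum_finPair, one_apply, ite_mul, Finset.sum_ite_irrel]

lemma kronF_one_colM_mulVec {N q : ℕ} (v : Fin N → ℝ) (w : Fin q → ℝ) (h : N * 1 = N) :
    kronF (1 : Matrix (Fin N) (Fin N) ℝ) (colM w) *ᵥ (v ∘ finCongr h) = vkronF v w := by
  funext x
  obtain ⟨i, k, rfl⟩ := finPair_surjective x
  rw [kronF_one_mulVec_finPair]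
  simp [mulVec, dotProduct, colM, cast_finPair_fin_one, mul_comm]

theorem PiMat_mulVec_vkronF {r1 r2 r3 r4 : ℕ} (b : Matrix (Fin r1) (Fin r2) ℝ)
    (a : Matrix (Fin r3) (Fin r4) ℝ) (h : r2 * r1 * (r4 * r3) = r2 * (r1 * (r4 * r3)))
    (h' : r2 * (r4 * (r1 * r3)) = r2 * r4 * (r1 * r3)) :
    PiMat r1 r2 r3 r4 *ᵥ (vkronF (vecF b) (vecF a) ∘ (finCongr h).symm) =
      vecF (kronF b a) ∘ finCongr h' := by
  funext x
  obtain ⟨i, y, rfl⟩ := finPair_surjective x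
  obtain ⟨l, z, rfl⟩ := finPair_surjective y
  obtain ⟨j, s, rfl⟩ := finPair_surjective z
  rw [PiMat, kronF_one_mulVec_finPair, ← mulVec_mulVec]
  -- each block is `vec` of a matrix, so both commutation matrices act by transposition
  have hblock : (fun c => (vkronF (vecF b) (vecF a) ∘ (finCongr h).symm) (finPair i c)) =
      vecF (of fun z j => b j i * vecF a z) := by
    funext c
    obtain ⟨j, z, rfl⟩ := finPair_surjective c
    simp [cast_finPair_finPair]
  rw [hblock]
  simp only [reindex_apply, submatrix_mulVec_equiv, Equiv.symm_symm, Equiv.coe_refl,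
    Function.comp_id, commF_mulVec_vecF, finCongr_symm]
  rw [kronF_one_mulVec_finPair]
  have hblock' : (fun t => (vecF (of fun z j => b j i * vecF a z)ᵀ ∘ finCongr (by ring))
      (finPair l t)) = vecF (of fun j s => b j i * a s l) := by
    funext t
    obtain ⟨s, j, rfl⟩ := finPair_surjective t
    simp [cast_finPair_finPair]
  rw [hblock', commF_mulVec_vecF]
  simp [cast_finPair_finPair]

/-- `V₂ = (Fᵀ ⊗ A) Π (I ⊗ vec a)`, which is the random matrix of the theorem at `F = f(W)`. -/
noncomputable def foldedDesign {pR pL mR mL k : ℕ} (A : Matrix (Fin (pR * pL)) (Fin (pR * pL)) ℝ)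
    (a : Matrix (Fin pL) (Fin mL) ℝ) (F : Matrix (Fin (mR * mL)) (Fin k) ℝ) :
    Matrix (Fin (k * (pR * pL))) (Fin (mR * pR)) ℝ :=
  Matrix.reindex (Equiv.refl _) (finCongr (show (mR * pR) * 1 = mR * pR by ring))
    (kronF Fᵀ A *
      Matrix.reindex (finCongr (show mR * (mL * (pR * pL)) = (mR * mL) * (pR * pL) by ring))
        (Equiv.refl _) (PiMat pR mR pL mL) *
      Matrix.reindex (finCongr (show (mR * pR) * (mL * pL) = mR * (pR * (mL * pL)) by ring))
        (Equiv.refl _)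
        (kronF (1 : Matrix (Fin (mR * pR)) (Fin (mR * pR)) ℝ) (colM (vecF a))))

theorem foldedDesign_mulVec_vecF {pR pL mR mL k : ℕ}
    (A : Matrix (Fin (pR * pL)) (Fin (pR * pL)) ℝ) (a : Matrix (Fin pL) (Fin mL) ℝ)
    (F : Matrix (Fin (mR * mL)) (Fin k) ℝ) (b : Matrix (Fin pR) (Fin mR) ℝ) :
    foldedDesign A a F *ᵥ vecF b = vecF (A * kronF b a * F) := by
  simp only [foldedDesign, reindex_apply, submatrix_mulVec_equiv, Equiv.symm_symm, Equiv.coe_refl,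
    Function.comp_id, ← mulVec_mulVec]
  rw [kronF_one_colM_mulVec, PiMat_mulVec_vkronF b a _ (by ring), Function.comp_assoc,
    Equiv.self_comp_symm, Function.comp_id, vecF_mul_mul, Equiv.refl_symm, Equiv.coe_refl,
    Function.comp_id]

lemma sum_sub_sq_eq {ι : Type*} [Fintype ι] (v w : ι → ℝ) :
    ∑ i, (v - w) i ^ 2 = ∑ i, v i ^ 2 + (∑ i, w i ^ 2 - 2 * (v ⬝ᵥ w)) := by
  simp only [dotProduct, Finset.mul_sum, ← Finset.sum_sub_distrib, ← Finset.sum_add_distrib,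
    Pi.sub_apply]
  exact Finset.sum_congr rfl fun i _ => by ring

section LeastSquares

variable {Ω ι κ : Type*} [MeasurableSpace Ω] {P : Measure Ω}

lemma memLp_mulVec_apply [Fintype κ] {p : ℝ≥0∞} {M : Ω → Matrix ι κ ℝ}
    (hM : ∀ i j, MemLp (fun ω => M ω i j) p P) (c : κ → ℝ) (i : ι) :
    MemLp (fun ω => (M ω *ᵥ c) i) p P := by
  have := memLp_finsetSum' Finset.univ fun j _ => (hM i j).mul_const (c j)
  simpa only [mulVec, dotProduct, Finset.sum_fn] using this

lemma memLp_const_mul_apply {ν : Type*} [Fintype ν] {p : ℝ≥0∞} {M : Ω → Matrix ν κ ℝ}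
    (hM : ∀ i j, MemLp (fun ω => M ω i j) p P) (C : Matrix ι ν ℝ) (i : ι) (j : κ) :
    MemLp (fun ω => (C * M ω) i j) p P := by
  have := memLp_finsetSum' Finset.univ fun l _ => (hM l j).const_mul (C i l)
  simpa only [mul_apply, Finset.sum_fn] using this

lemma integrable_mulVec_apply [Fintype κ] {M : Ω → Matrix ι κ ℝ}
    (hM : ∀ i j, Integrable (fun ω => M ω i j) P) (c : κ → ℝ) (i : ι) :
    Integrable (fun ω => (M ω *ᵥ c) i) P := by
  simp only [← memLp_one_iff_integrable] at hM ⊢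
  exact memLp_mulVec_apply hM c i

lemma integral_dotProduct_const [Fintype κ] {v : Ω → κ → ℝ}
    (hv : ∀ j, Integrable (fun ω => v ω j) P) (c : κ → ℝ) :
    ∫ ω, v ω ⬝ᵥ c ∂P = (fun j => ∫ ω, v ω j ∂P) ⬝ᵥ c := by
  simp only [dotProduct]
  rw [integral_finsetSum _ fun j _ => (hv j).mul_const _]
  simp only [integral_mul_const]

lemma integral_mulVec_apply [Fintype κ] {M : Ω → Matrix ι κ ℝ}
    (hM : ∀ i j, Integrable (fun ω => M ω i j) P) (c : κ → ℝ) (i : ι) :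
    ∫ ω, (M ω *ᵥ c) i ∂P = ((of fun i j => ∫ ω, M ω i j ∂P) *ᵥ c) i :=
  integral_dotProduct_const (hM i) c

lemma integrable_transpose_mul_apply [Fintype ι] {V : Ω → Matrix ι κ ℝ}
    (hV : ∀ i j, MemLp (fun ω => V ω i j) 2 P) (j l : κ) :
    Integrable (fun ω => ((V ω)ᵀ * V ω) j l) P := by
  simp only [mul_apply, transpose_apply]
  exact integrable_finsetSum _ fun i _ => (hV i j).integrable_mul (hV i l)

lemma integrable_transpose_mulVec_apply [Fintype ι] {V : Ω → Matrix ι κ ℝ} {v : Ω → ι → ℝ}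
    (hV : ∀ i j, MemLp (fun ω => V ω i j) 2 P) (hv : ∀ i, MemLp (fun ω => v ω i) 2 P) (j : κ) :
    Integrable (fun ω => ((V ω)ᵀ *ᵥ v ω) j) P := by
  simp only [mulVec, dotProduct, transpose_apply]
  exact integrable_finsetSum _ fun i _ => (hV i j).integrable_mul (hv i)

variable [Fintype ι] [Fintype κ] {V₁ : Ω → ι → ℝ} {V₂ : Ω → Matrix ι κ ℝ}
  {M₂ : Matrix κ κ ℝ} {M₁ : κ → ℝ} {xstar : κ → ℝ}

theorem integral_sub_mulVec_dotProduct_mulVec_eq_zero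
    (hV₁ : ∀ i, MemLp (fun ω => V₁ ω i) 2 P) (hV₂ : ∀ i j, MemLp (fun ω => V₂ ω i j) 2 P)
    (hM₂ : ∀ j l, M₂ j l = ∫ ω, ((V₂ ω)ᵀ * V₂ ω) j l ∂P)
    (hM₁ : ∀ j, M₁ j = ∫ ω, ((V₂ ω)ᵀ *ᵥ V₁ ω) j ∂P) (hnormal : M₂ *ᵥ xstar = M₁) (y : κ → ℝ) :
    ∫ ω, (V₁ ω - V₂ ω *ᵥ xstar) ⬝ᵥ V₂ ω *ᵥ y ∂P = 0 := by
  have hgram := integrable_transpose_mul_apply hV₂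
  have hmoment : ∀ j, ∫ ω, ((V₂ ω)ᵀ *ᵥ (V₁ ω - V₂ ω *ᵥ xstar)) j ∂P = 0 := by
    intro j
    have hM₂' : (of fun j l => ∫ ω, ((V₂ ω)ᵀ * V₂ ω) j l ∂P) = M₂ :=
      Matrix.ext fun j l => (hM₂ j l).symm
    simp only [mulVec_sub, mulVec_mulVec, Pi.sub_apply]
    rw [integral_sub (integrable_transpose_mulVec_apply hV₂ hV₁ j)
        (integrable_mulVec_apply hgram xstar j),
      integral_mulVec_apply hgram, hM₂', hnormal, hM₁, sub_self]
  simp only [dotProduct_mulVec, ← mulVec_transpose]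
  have hres : ∀ i, MemLp (fun ω => (V₁ ω - V₂ ω *ᵥ xstar) i) 2 P := fun i =>
    (hV₁ i).sub (memLp_mulVec_apply hV₂ xstar i)
  rw [integral_dotProduct_const (integrable_transpose_mulVec_apply hV₂ hres), funext hmoment]
  exact zero_dotProduct y

theorem integral_sum_sq_sub_mulVec_le
    (hV₁ : ∀ i, MemLp (fun ω => V₁ ω i) 2 P) (hV₂ : ∀ i j, MemLp (fun ω => V₂ ω i j) 2 P)
    (hM₂ : ∀ j l, M₂ j l = ∫ ω, ((V₂ ω)ᵀ * V₂ ω) j l ∂P)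
    (hM₁ : ∀ j, M₁ j = ∫ ω, ((V₂ ω)ᵀ *ᵥ V₁ ω) j ∂P) (hnormal : M₂ *ᵥ xstar = M₁) (x : κ → ℝ) :
    ∫ ω, ∑ i, (V₁ ω - V₂ ω *ᵥ xstar) i ^ 2 ∂P ≤ ∫ ω, ∑ i, (V₁ ω - V₂ ω *ᵥ x) i ^ 2 ∂P := by
  set r : Ω → ι → ℝ := fun ω => V₁ ω - V₂ ω *ᵥ xstar
  set y := x - xstar
  have hr : ∀ i, MemLp (fun ω => r ω i) 2 P := fun i =>
    (hV₁ i).sub (memLp_mulVec_apply hV₂ xstar i)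
  have hy : ∀ i, MemLp (fun ω => (V₂ ω *ᵥ y) i) 2 P := memLp_mulVec_apply hV₂ y
  have hsplit : ∀ ω, ∑ i, (V₁ ω - V₂ ω *ᵥ x) i ^ 2 =
      ∑ i, r ω i ^ 2 + (∑ i, (V₂ ω *ᵥ y) i ^ 2 - 2 * (r ω ⬝ᵥ V₂ ω *ᵥ y)) := fun ω => by
    rw [← sum_sub_sq_eq, mulVec_sub, sub_sub_sub_cancel_right]
  have hsq : ∀ v : Ω → ι → ℝ, (∀ i, MemLp (fun ω => v ω i) 2 P) →
      Integrable (fun ω => ∑ i, v ω i ^ 2) P := fun v hv =>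
    integrable_finsetSum _ fun i _ => (hv i).integrable_sq
  have hcross : Integrable (fun ω => 2 * (r ω ⬝ᵥ V₂ ω *ᵥ y)) P :=
    (integrable_finsetSum _ fun i _ => (hr i).integrable_mul (hy i)).const_mul 2
  have hnonneg : 0 ≤ ∫ ω, ∑ i, (V₂ ω *ᵥ y) i ^ 2 ∂P :=
    integral_nonneg fun ω => Finset.sum_nonneg fun i _ => sq_nonneg _
  calc ∫ ω, ∑ i, r ω i ^ 2 ∂P
      ≤ ∫ ω, ∑ i, r ω i ^ 2 ∂P +
          (∫ ω, ∑ i, (V₂ ω *ᵥ y) i ^ 2 ∂P - ∫ ω, 2 * (r ω ⬝ᵥ V₂ ω *ᵥ y) ∂P) := by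
        rw [integral_const_mul, integral_sub_mulVec_dotProduct_mulVec_eq_zero hV₁ hV₂ hM₂ hM₁
          hnormal]
        linarith
    _ = ∫ ω, ∑ i, (V₁ ω - V₂ ω *ᵥ x) i ^ 2 ∂P := by
        have hrest : Integrable
            (fun ω => ∑ i, (V₂ ω *ᵥ y) i ^ 2 - 2 * (r ω ⬝ᵥ V₂ ω *ᵥ y)) P :=
          (hsq _ hy).sub hcross
        simp_rw [hsplit]
        rw [integral_add (hsq r hr) hrest, integral_sub (hsq _ hy) hcross]

end LeastSquares

/-- Theorem 4, part 1: for fixed `f` and `a`, the minimizer of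
`b ↦ E‖A u(W) − A (b ⊗ a) f(W)‖²` is given by
`vec(b*) = (E[V₂ᵀV₂])⁻¹ E[V₂ᵀV₁]` with `V₁ = vec(A u(W))` and
`V₂ = (f(W)ᵀ ⊗ A) Π (I_{p_R m_R} ⊗ vec(a))`. -/
theorem folded_ls_minimizer_b {Ω : Type*} [mΩ : MeasurableSpace Ω]
    (P : Measure Ω)
    (d pR pL mR mL k : ℕ)
    (W : Ω → Fin d → ℝ)
    (u : (Fin d → ℝ) → Matrix (Fin (pR * pL)) (Fin k) ℝ)
    (f : (Fin d → ℝ) → Matrix (Fin (mR * mL)) (Fin k) ℝ)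
    (huL2 : ∀ i j, MemLp (fun ω => u (W ω) i j) 2 P)
    (hfL2 : ∀ i j, MemLp (fun ω => f (W ω) i j) 2 P)
    (A : Matrix (Fin (pR * pL)) (Fin (pR * pL)) ℝ)
    (a : Matrix (Fin pL) (Fin mL) ℝ)
    (V1 : Ω → Fin (k * (pR * pL)) → ℝ)
    (hV1 : ∀ ω, V1 ω = vecF (A * u (W ω)))
    (V2 : Ω → Matrix (Fin (k * (pR * pL))) (Fin (mR * pR)) ℝ)
    (hV2 : ∀ ω, V2 ω =
      Matrix.reindex (Equiv.refl _) (finCongr (show (mR * pR) * 1 = mR * pR by ring))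
        (kronF (f (W ω))ᵀ A *
          Matrix.reindex (finCongr (show mR * (mL * (pR * pL)) = (mR * mL) * (pR * pL) by ring))
            (Equiv.refl _) (PiMat pR mR pL mL) *
          Matrix.reindex (finCongr (show (mR * pR) * (mL * pL) = mR * (pR * (mL * pL)) by ring))
            (Equiv.refl _)
            (kronF (1 : Matrix (Fin (mR * pR)) (Fin (mR * pR)) ℝ) (colM (vecF a)))))
    (M2 : Matrix (Fin (mR * pR)) (Fin (mR * pR)) ℝ)
    (hM2 : ∀ i j, M2 i j = ∫ ω, ((V2 ω)ᵀ * V2 ω) i j ∂P)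
    (hM2inv : IsUnit M2)
    (M1 : Fin (mR * pR) → ℝ) (hM1 : ∀ i, M1 i = ∫ ω, ((V2 ω)ᵀ *ᵥ V1 ω) i ∂P)
    (bstar : Matrix (Fin pR) (Fin mR) ℝ) (hbstar : vecF bstar = M2⁻¹ *ᵥ M1) :
    ∀ b : Matrix (Fin pR) (Fin mR) ℝ,
      ∫ ω, ∑ i, ∑ j, (A * u (W ω) - A * kronF bstar a * f (W ω)) i j ^ 2 ∂P ≤
        ∫ ω, ∑ i, ∑ j, (A * u (W ω) - A * kronF b a * f (W ω)) i j ^ 2 ∂P := by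
  intro b
  have hdesign : ∀ ω c, V2 ω *ᵥ vecF c = vecF (A * kronF c a * f (W ω)) := fun ω c => by
    rw [hV2 ω]
    exact foldedDesign_mulVec_vecF A a (f (W ω)) c
  have hV1L2 : ∀ i, MemLp (fun ω => V1 ω i) 2 P := by
    intro i
    obtain ⟨l, r, rfl⟩ := finPair_surjective i
    simpa only [hV1, vecF_finPair] using memLp_const_mul_apply huL2 A r l
  have hV2L2 : ∀ i j, MemLp (fun ω => V2 ω i j) 2 P := by
    intro i j
    obtain ⟨c, hc⟩ := vecF_surjective (Pi.single j 1)
    obtain ⟨l, r, rfl⟩ := finPair_surjective i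
    have hentry : ∀ ω, V2 ω (finPair l r) j = (A * kronF c a * f (W ω)) r l := fun ω => by
      rw [← vecF_finPair (A * kronF c a * f (W ω)), ← hdesign, hc, mulVec_single_one, col_apply]
    simpa only [hentry] using memLp_const_mul_apply hfL2 (A * kronF c a) r l
  have hnormal : M2 *ᵥ vecF bstar = M1 := by
    rw [hbstar, mulVec_mulVec, mul_nonsing_inv _ ((isUnit_iff_isUnit_det M2).mp hM2inv),
      one_mulVec]
  simpa only [hV1, hdesign, ← vecF_sub, sum_vecF_sq] using
    integral_sum_sq_sub_mulVec_le hV1L2 hV2L2 hM2 hM1 hnormal (vecF b)
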